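/- arXiv:1912.06750 — 4 statements merged into one kernel-verified Lean document; each statement's English description precedes it below -/
import Mathlib

section
/- Let ζ be a nonnegative, radial, radially nonincreasing function on ℝ³ with supp(ζ) ⊂ B(0,1), ∫_{ℝ³} ζ = 1, and I := ∫_{ℝ³} ζ(y)/|y|² dy < ∞. Then for every ε > 0 and every x ∈ ℝ³ with x ≠ 0, one has ∫_{ℝ³} ζ_ε(z)/|x−z|² dz ≤ 4I/|x|², where ζ_ε(z) := ε^{-3} ζ(z/ε). -/
open MeasureTheory Real
open scoped ENNReal

noncomputable section

set_option maxHeartbeats 2000000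

abbrev E3 : Type := EuclideanSpace ℝ (Fin 3)

theorem statement3
    (ζ : E3 → ℝ) (hζ_meas : Measurable ζ)
    (hζ_nonneg : ∀ x, 0 ≤ ζ x)
    (hζ_radial : ∀ x y : E3, ‖x‖ = ‖y‖ → ζ x = ζ y)
    (hζ_mono : ∀ x y : E3, ‖x‖ ≤ ‖y‖ → ζ y ≤ ζ x)
    (hζ_supp : Function.support ζ ⊆ Metric.ball (0 : E3) 1)
    (hζ_mass : ∫ x, ζ x = 1)
    (I : ℝ) (hI_int : Integrable fun y : E3 => ζ y / ‖y‖ ^ 2)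
    (hI : ∫ y : E3, ζ y / ‖y‖ ^ 2 = I) :
    ∀ ε > (0 : ℝ), ∀ x : E3, x ≠ 0 →
      (∫ z : E3, (ε ^ 3)⁻¹ * ζ (ε⁻¹ • z) / ‖x - z‖ ^ 2) ≤ 4 * I / ‖x‖ ^ 2 := by
  have hfinrank : Module.finrank ℝ E3 = 3 := finrank_euclideanSpace_fin
  -- a.e. the point is nonzero
  have hae0 : ∀ᵐ (y : E3), y ≠ (0 : E3) := by
    rw [ae_iff]
    have : {y : E3 | ¬ y ≠ 0} = {(0 : E3)} := by ext y; simp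
    rw [this]
    exact measure_singleton _
  -- points outside the unit ball have ζ = 0
  have hsupp1 : ∀ y : E3, 1 ≤ ‖y‖ → ζ y = 0 := by
    intro y hy
    by_contra h
    have := hζ_supp (Function.mem_support.2 h)
    rw [Metric.mem_ball, dist_zero_right] at this
    linarith
  -- a.e. pointwise : ζ y ≤ ζ y / ‖y‖²
  have hζ_le : ∀ᵐ y : E3, ζ y ≤ ζ y / ‖y‖ ^ 2 := by
    filter_upwards [hae0] with y hy
    by_cases h1 : 1 ≤ ‖y‖
    · rw [hsupp1 y h1]; simp
    · push_neg at h1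
      have hy0 : 0 < ‖y‖ := norm_pos_iff.2 hy
      rw [le_div_iff₀ (by positivity)]
      nlinarith [mul_nonneg (hζ_nonneg y) (mul_nonneg
        (by linarith : (0:ℝ) ≤ 1 - ‖y‖) (by positivity : (0:ℝ) ≤ 1 + ‖y‖))]
  have hζ_int : Integrable ζ := by
    refine hI_int.mono' hζ_meas.aestronglyMeasurable ?_
    filter_upwards [hζ_le] with y h
    rwa [Real.norm_eq_abs, abs_of_nonneg (hζ_nonneg y)]
  have hI1 : (1 : ℝ) ≤ I := by
    rw [← hζ_mass, ← hI]
    exact integral_mono_ae hζ_int hI_int hζ_le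
  have hI0 : (0 : ℝ) ≤ I := by linarith
  intro ε hε x hx
  have ha : 0 < ‖x‖ := norm_pos_iff.2 hx
  have hε3 : (0 : ℝ) < ε ^ 3 := by positivity
  -- Step 0 : change of variables z = ε y
  have h0 : (∫ z : E3, (ε ^ 3)⁻¹ * ζ (ε⁻¹ • z) / ‖x - z‖ ^ 2)
      = ∫ y : E3, ζ y / ‖x - ε • y‖ ^ 2 := by
    have key := MeasureTheory.Measure.integral_comp_inv_smul_of_nonneg
      (volume : Measure E3) (fun y => ζ y / ‖x - ε • y‖ ^ 2) hε.le
    rw [hfinrank] at key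
    calc ∫ z : E3, (ε ^ 3)⁻¹ * ζ (ε⁻¹ • z) / ‖x - z‖ ^ 2
        = ∫ z : E3, (ε ^ 3)⁻¹ * ((fun y => ζ y / ‖x - ε • y‖ ^ 2) (ε⁻¹ • z)) := by
          congr 1; funext z
          show (ε ^ 3)⁻¹ * ζ (ε⁻¹ • z) / ‖x - z‖ ^ 2
            = (ε ^ 3)⁻¹ * (ζ (ε⁻¹ • z) / ‖x - ε • ε⁻¹ • z‖ ^ 2)
          rw [smul_inv_smul₀ hε.ne', mul_div_assoc]
      _ = (ε ^ 3)⁻¹ * ∫ z : E3, (fun y => ζ y / ‖x - ε • y‖ ^ 2) (ε⁻¹ • z) :=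
          integral_const_mul _ _
      _ = (ε ^ 3)⁻¹ * (ε ^ 3 • ∫ y : E3, ζ y / ‖x - ε • y‖ ^ 2) := by rw [key]
      _ = ∫ y : E3, ζ y / ‖x - ε • y‖ ^ 2 := by
          rw [smul_eq_mul, ← mul_assoc, inv_mul_cancel₀ hε3.ne', one_mul]
  rw [h0]
  by_cases hcase : 2 * ε ≤ ‖x‖
  · -- easy case : ε small compared to ‖x‖
    have hpt : ∀ y : E3, ζ y / ‖x - ε • y‖ ^ 2 ≤ 4 / ‖x‖ ^ 2 * ζ y := by
      intro y
      by_cases hy : ζ y = 0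
      · simp [hy]
      · have hy1 : ‖y‖ < 1 := by
          have := hζ_supp (Function.mem_support.2 hy)
          rwa [Metric.mem_ball, dist_zero_right] at this
        have hεy : ‖ε • y‖ = ε * ‖y‖ := by
          rw [norm_smul, Real.norm_eq_abs, abs_of_nonneg hε.le]
        have hlow : ‖x‖ / 2 ≤ ‖x - ε • y‖ := by
          have h1 : ‖x‖ - ‖ε • y‖ ≤ ‖x - ε • y‖ := norm_sub_norm_le _ _
          rw [hεy] at h1
          nlinarith
        have h2 : 0 < ‖x - ε • y‖ := lt_of_lt_of_le (by positivity) hlow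
        have h3 : ‖x‖ ^ 2 ≤ 4 * ‖x - ε • y‖ ^ 2 := by nlinarith
        rw [div_le_iff₀ (by positivity), div_mul_eq_mul_div, div_mul_eq_mul_div,
          le_div_iff₀ (by positivity)]
        nlinarith [mul_le_mul_of_nonneg_left h3 (hζ_nonneg y)]
    calc ∫ y : E3, ζ y / ‖x - ε • y‖ ^ 2
        ≤ ∫ y : E3, 4 / ‖x‖ ^ 2 * ζ y := by
          refine integral_mono_of_nonneg
            (ae_of_all _ fun y => div_nonneg (hζ_nonneg y) (by positivity))
            (hζ_int.const_mul _) (ae_of_all _ hpt)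
      _ = 4 / ‖x‖ ^ 2 := by rw [integral_const_mul, hζ_mass, mul_one]
      _ ≤ 4 * I / ‖x‖ ^ 2 := by
          rw [div_le_div_iff₀ (by positivity) (by positivity)]
          nlinarith
  · -- hard case : ‖x‖ < 2 ε
    push_neg at hcase
    -- a point with positive ζ and positive norm
    obtain ⟨y₀, hy₀ne, hy₀pos⟩ : ∃ y₀ : E3, y₀ ≠ 0 ∧ 0 < ζ y₀ := by
      by_contra h
      push_neg at h
      have hz : ∫ y : E3, ζ y = 0 := by
        apply integral_eq_zero_of_ae
        filter_upwards [hae0] with y hy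
        exact le_antisymm (h y hy) (hζ_nonneg y)
      rw [hζ_mass] at hz
      norm_num at hz
    have hr₀ : 0 < ‖y₀‖ := norm_pos_iff.2 hy₀ne
    set G : ℝ → E3 → ℝ :=
      fun r u => Set.indicator (Metric.closedBall (0 : E3) r) (fun u => (‖u‖ ^ 2)⁻¹) u with hGdef
    have hG_nonneg : ∀ r (u : E3), 0 ≤ G r u := by
      intro r u
      exact Set.indicator_nonneg (fun u _ => by positivity) u
    have hG_of_mem : ∀ (r : ℝ) (u : E3), ‖u‖ ≤ r → G r u = (‖u‖ ^ 2)⁻¹ := by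
      intro r u h
      simp only [hGdef]
      exact Set.indicator_of_mem (by rw [Metric.mem_closedBall, dist_zero_right]; exact h) _
    have hG_of_not : ∀ (r : ℝ) (u : E3), r < ‖u‖ → G r u = 0 := by
      intro r u h
      simp only [hGdef]
      exact Set.indicator_of_notMem
        (by rw [Metric.mem_closedBall, dist_zero_right]; exact not_le.2 h) _
    -- scaling identity
    have hGscale : ∀ (s r : ℝ), 0 < s → 0 < r → ∀ u : E3,
        G r u = ((r / s)⁻¹) ^ 2 * G s ((r / s)⁻¹ • u) := by
      intro s r hs hr u
      have hk : 0 < r / s := by positivity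
      have hnorm : ‖(r / s)⁻¹ • u‖ = (r / s)⁻¹ * ‖u‖ := by
        rw [norm_smul, Real.norm_eq_abs, abs_of_nonneg (by positivity)]
      have hrs : r / s * s = r := by field_simp
      by_cases hu : ‖u‖ ≤ r
      · have hmem2 : ‖(r / s)⁻¹ • u‖ ≤ s := by
          rw [hnorm, inv_mul_le_iff₀ hk]
          nlinarith
        rw [hG_of_mem r u hu, hG_of_mem s _ hmem2, hnorm, mul_pow, mul_inv, ← mul_assoc,
          mul_inv_cancel₀ (by positivity : (0:ℝ) < ((r/s)⁻¹)^2).ne', one_mul]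
      · push_neg at hu
        have hmem2 : s < ‖(r / s)⁻¹ • u‖ := by
          rw [hnorm]
          rw [lt_inv_mul_iff₀ hk]
          nlinarith
        rw [hG_of_not r u hu, hG_of_not s _ hmem2, mul_zero]
    -- integrability of G ‖y₀‖
    have hGr₀_int : Integrable (G ‖y₀‖) := by
      rw [hGdef, integrable_indicator_iff measurableSet_closedBall]
      refine Integrable.mono' (((hI_int.restrict
        (s := Metric.closedBall (0:E3) ‖y₀‖))).const_mul (ζ y₀)⁻¹)
        ((measurable_norm.pow_const 2).inv.aestronglyMeasurable) ?_
      filter_upwards [ae_restrict_mem measurableSet_closedBall, ae_restrict_of_ae hae0]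
        with u hu hu0
      rw [Metric.mem_closedBall, dist_zero_right] at hu
      have hζu : ζ y₀ ≤ ζ u := hζ_mono u y₀ hu
      have hupos : 0 < ‖u‖ := norm_pos_iff.2 hu0
      rw [Real.norm_eq_abs, abs_of_nonneg (by positivity)]
      calc (‖u‖ ^ 2)⁻¹ = (ζ y₀)⁻¹ * (ζ y₀ / ‖u‖ ^ 2) := by field_simp
        _ ≤ (ζ y₀)⁻¹ * (ζ u / ‖u‖ ^ 2) := by gcongr
    -- integrability of all G r
    have hG0 : G 0 = fun _ => (0 : ℝ) := by
      funext u
      by_cases hu : ‖u‖ ≤ 0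
      · rw [hG_of_mem 0 u hu]
        have : ‖u‖ = 0 := le_antisymm hu (norm_nonneg u)
        rw [this]
        norm_num
      · push_neg at hu
        exact hG_of_not 0 u hu
    have hG_int : ∀ r : ℝ, 0 ≤ r → Integrable (G r) := by
      intro r hr
      rcases eq_or_lt_of_le hr with h | h
      · rw [← h, hG0]; exact integrable_zero _ _ _
      · have hfun : G r = fun u => ((r / ‖y₀‖)⁻¹) ^ 2 * G ‖y₀‖ ((r / ‖y₀‖)⁻¹ • u) := by
          funext u; exact hGscale ‖y₀‖ r hr₀ h u
        rw [hfun]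
        exact (hGr₀_int.comp_smul (by positivity : (0:ℝ) < (r / ‖y₀‖)⁻¹).ne').const_mul _
    -- value of ∫ G r by scaling
    have hG1_int : Integrable (G 1) := hG_int 1 zero_le_one
    set c : ℝ := ∫ u : E3, G 1 u with hc
    have hG_val : ∀ r : ℝ, 0 ≤ r → ∫ u : E3, G r u = c * r := by
      intro r hr
      rcases eq_or_lt_of_le hr with h | h
      · rw [← h, hG0]; simp
      · have hfun : ∀ u : E3, G r u = (r⁻¹) ^ 2 * G 1 (r⁻¹ • u) := by
          intro u
          have := hGscale 1 r one_pos h u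
          simpa using this
        have key := MeasureTheory.Measure.integral_comp_inv_smul_of_nonneg
          (volume : Measure E3) (G 1) hr
        rw [hfinrank] at key
        calc ∫ u : E3, G r u = ∫ u : E3, (r⁻¹) ^ 2 * G 1 (r⁻¹ • u) := by
              congr 1; funext u; exact hfun u
          _ = (r⁻¹) ^ 2 * ∫ u : E3, G 1 (r⁻¹ • u) := integral_const_mul _ _
          _ = (r⁻¹) ^ 2 * (r ^ 3 • c) := by rw [key]
          _ = c * r := by rw [smul_eq_mul]; field_simp
    -- positivity of c
    have hc_pos : 0 < c := by
      have hind_int : Integrable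
          (fun u : E3 => Set.indicator (Metric.closedBall (0:E3) 1) (fun _ => (1:ℝ)) u) := by
        rw [integrable_indicator_iff measurableSet_closedBall]
        exact integrableOn_const measure_closedBall_lt_top.ne
      have h1 : ∫ u : E3, Set.indicator (Metric.closedBall (0:E3) 1) (fun _ => (1:ℝ)) u ≤ c := by
        refine integral_mono_ae hind_int hG1_int ?_
        filter_upwards [hae0] with u hu
        by_cases h : ‖u‖ ≤ 1
        · rw [hG_of_mem 1 u h, Set.indicator_of_mem
            (by rw [Metric.mem_closedBall, dist_zero_right]; exact h)]
          have hupos : 0 < ‖u‖ := norm_pos_iff.2 hu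
          have hsq : 0 < ‖u‖ ^ 2 := by positivity
          have hinv : 0 < (‖u‖ ^ 2)⁻¹ := by positivity
          have hle1 : ‖u‖ ^ 2 ≤ 1 := by nlinarith
          nlinarith [mul_inv_cancel₀ hsq.ne']
        · push_neg at h
          rw [hG_of_not 1 u h, Set.indicator_of_notMem
            (by rw [Metric.mem_closedBall, dist_zero_right]; exact not_le.2 h)]
      have h2 : ∫ u : E3, Set.indicator (Metric.closedBall (0:E3) 1) (fun _ => (1:ℝ)) u
          = (volume (Metric.closedBall (0:E3) 1)).toReal := by
        rw [integral_indicator_const _ measurableSet_closedBall, smul_eq_mul, mul_one, measureReal_def]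
      have h3 : 0 < (volume (Metric.closedBall (0:E3) 1)).toReal :=
        ENNReal.toReal_pos (Metric.measure_closedBall_pos _ _ one_pos).ne' measure_closedBall_lt_top.ne
      linarith [h1, h2 ▸ h1]
    -- the comparison point v
    set ρ : ℝ := ‖x‖ / (2 * ε) with hρ
    have hρpos : 0 < ρ := by positivity
    set v : E3 := ρ • (EuclideanSpace.single (0 : Fin 3) (1:ℝ)) with hv
    have hvnorm : ‖v‖ = ρ := by
      rw [hv, norm_smul, EuclideanSpace.norm_single, norm_one, mul_one,
        Real.norm_eq_abs, abs_of_nonneg hρpos.le]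
    -- bound : ζ v * (c * ρ) ≤ I
    have hζvI : ζ v * (c * ρ) ≤ I := by
      have hmono : ∫ u : E3, ζ v * G ρ u ≤ ∫ u : E3, ζ u / ‖u‖ ^ 2 := by
        refine integral_mono_ae ((hG_int ρ hρpos.le).const_mul _) hI_int ?_
        filter_upwards [hae0] with u hu
        by_cases h : ‖u‖ ≤ ρ
        · rw [hG_of_mem ρ u h]
          have hζvu : ζ v ≤ ζ u := hζ_mono u v (by rw [hvnorm]; exact h)
          have hupos : 0 < ‖u‖ := norm_pos_iff.2 hu
          rw [div_eq_mul_inv]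
          exact mul_le_mul_of_nonneg_right hζvu (by positivity)
        · push_neg at h
          rw [hG_of_not ρ u h, mul_zero]
          exact div_nonneg (hζ_nonneg u) (by positivity)
      rw [integral_const_mul, hG_val ρ hρpos.le, hI] at hmono
      exact hmono
    -- the inner radius
    set r1 : ℝ := max (‖x‖ - ε) 0 with hr1def
    have hr1 : 0 ≤ r1 := le_max_right _ _
    have hr1ε : r1 ≤ ε := by
      apply max_le _ hε.le
      linarith
    -- translation integrals
    have htrans : ∀ r : ℝ, 0 ≤ r → Integrable (fun y : E3 => G r (x - ε • y)) ∧
        (∫ y : E3, G r (x - ε • y)) = (ε ^ 3)⁻¹ * (c * r) := by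
      intro r hr
      have hint := hG_int r hr
      have h1 : Integrable (fun w : E3 => G r (x - w)) := hint.comp_sub_left x
      constructor
      · exact h1.comp_smul hε.ne'
      · have key := MeasureTheory.Measure.integral_comp_smul_of_nonneg
          (volume : Measure E3) (fun w : E3 => G r (x - w)) ε (hR := hε.le)
        rw [hfinrank] at key
        calc (∫ y : E3, G r (x - ε • y))
            = ∫ y : E3, (fun w : E3 => G r (x - w)) (ε • y) := rfl
          _ = (ε ^ 3)⁻¹ • ∫ w : E3, G r (x - w) := key
          _ = (ε ^ 3)⁻¹ * ∫ w : E3, G r w := by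
              rw [smul_eq_mul, integral_sub_left_eq_self (G r) volume x]
          _ = (ε ^ 3)⁻¹ * (c * r) := by rw [hG_val r hr]
    -- the dominating function
    set F : E3 → ℝ := fun y =>
      (ε⁻¹) ^ 2 * (ζ y / ‖y‖ ^ 2) + ζ v * (G ε (x - ε • y) - G r1 (x - ε • y)) with hF
    have hint_ε := (htrans ε hε.le).1
    have hint_r1 := (htrans r1 hr1).1
    have hsub : Integrable (fun y : E3 => G ε (x - ε • y) - G r1 (x - ε • y)) :=
      hint_ε.sub hint_r1
    have hf1int : Integrable (fun y : E3 => (ε⁻¹) ^ 2 * (ζ y / ‖y‖ ^ 2)) :=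
      hI_int.const_mul _
    have hf2int : Integrable (fun y : E3 => ζ v * (G ε (x - ε • y) - G r1 (x - ε • y))) :=
      hsub.const_mul _
    have hF_int : Integrable F := by rw [hF]; exact hf1int.add hf2int
    have hG_mono : ∀ u : E3, G r1 u ≤ G ε u := by
      intro u
      exact Set.indicator_le_indicator_of_subset
        (Metric.closedBall_subset_closedBall hr1ε) (fun a => by positivity) u
    -- the main pointwise bound
    have hpt : ∀ᵐ y : E3, ζ y / ‖x - ε • y‖ ^ 2 ≤ F y := by
      filter_upwards [hae0] with y hy
      have hf1 : 0 ≤ (ε⁻¹) ^ 2 * (ζ y / ‖y‖ ^ 2) :=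
        mul_nonneg (by positivity) (div_nonneg (hζ_nonneg y) (by positivity))
      have hf2 : 0 ≤ ζ v * (G ε (x - ε • y) - G r1 (x - ε • y)) :=
        mul_nonneg (hζ_nonneg v) (sub_nonneg.2 (hG_mono _))
      by_cases hζy : ζ y = 0
      · rw [hF]; simp only [hζy, zero_div]; linarith
      · have hy1 : ‖y‖ < 1 := by
          have := hζ_supp (Function.mem_support.2 hζy)
          rwa [Metric.mem_ball, dist_zero_right] at this
        have hynorm : 0 < ‖y‖ := norm_pos_iff.2 hy
        have hεy : ‖ε • y‖ = ε * ‖y‖ := by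
          rw [norm_smul, Real.norm_eq_abs, abs_of_nonneg hε.le]
        by_cases hcase2 : ε * ‖y‖ ≤ ‖x - ε • y‖
        · -- region 1
          have heq : (ε⁻¹) ^ 2 * (ζ y / ‖y‖ ^ 2) = ζ y / (ε * ‖y‖) ^ 2 := by
            rw [mul_pow, inv_pow, div_eq_mul_inv, div_eq_mul_inv, mul_inv, ← mul_assoc]
            ring
          have h1 : ζ y / ‖x - ε • y‖ ^ 2 ≤ ζ y / (ε * ‖y‖) ^ 2 := by
            apply div_le_div_of_nonneg_left (hζ_nonneg y) (by positivity)
            exact pow_le_pow_left₀ (by positivity) hcase2 2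
          rw [hF]
          dsimp only
          rw [heq]
          linarith
        · push_neg at hcase2
          by_cases hw0 : ‖x - ε • y‖ = 0
          · rw [hF]; simp only [hw0]
            rw [zero_pow (by norm_num : (2:ℕ) ≠ 0), div_zero]
            linarith
          · have hwpos : 0 < ‖x - ε • y‖ := lt_of_le_of_ne (norm_nonneg _) (Ne.symm hw0)
            have hwε : ‖x - ε • y‖ ≤ ε := by nlinarith
            have hwr1 : r1 < ‖x - ε • y‖ := by
              apply max_lt _ hwpos
              have h1 : ‖x‖ - ‖ε • y‖ ≤ ‖x - ε • y‖ := norm_sub_norm_le _ _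
              rw [hεy] at h1
              nlinarith
            have hρy : ρ ≤ ‖y‖ := by
              have h5 : ‖x‖ ≤ ‖x - ε • y‖ + ‖ε • y‖ := by
                calc ‖x‖ = ‖(x - ε • y) + ε • y‖ := by congr 1; abel
                  _ ≤ ‖x - ε • y‖ + ‖ε • y‖ := norm_add_le _ _
              rw [hεy] at h5
              rw [hρ, div_le_iff₀ (by positivity)]
              nlinarith
            have hζyv : ζ y ≤ ζ v := hζ_mono v y (by rw [hvnorm]; exact hρy)
            have hGε : G ε (x - ε • y) = (‖x - ε • y‖ ^ 2)⁻¹ := hG_of_mem _ _ hwε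
            have hGr1 : G r1 (x - ε • y) = 0 := hG_of_not _ _ hwr1
            have h6 : ζ y / ‖x - ε • y‖ ^ 2 ≤ ζ v * (G ε (x - ε • y) - G r1 (x - ε • y)) := by
              rw [hGε, hGr1, sub_zero, div_eq_mul_inv]
              exact mul_le_mul_of_nonneg_right hζyv (by positivity)
            rw [hF]; dsimp only
            linarith
    -- integrate the pointwise bound
    have hJ : (∫ y : E3, ζ y / ‖x - ε • y‖ ^ 2) ≤ ∫ y : E3, F y :=
      integral_mono_of_nonneg
        (ae_of_all _ fun y => div_nonneg (hζ_nonneg y) (by positivity)) hF_int hpt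
    have hFval : (∫ y : E3, F y)
        = (ε⁻¹) ^ 2 * I + ζ v * ((ε ^ 3)⁻¹ * (c * ε) - (ε ^ 3)⁻¹ * (c * r1)) := by
      rw [hF]
      rw [integral_add hf1int hf2int]
      rw [integral_const_mul, integral_const_mul, hI,
        integral_sub hint_ε hint_r1,
        (htrans ε hε.le).2, (htrans r1 hr1).2]
    -- final arithmetic
    have hζv_le : ζ v ≤ I / (c * ρ) := by
      rw [le_div_iff₀ (by positivity)]
      exact hζvI
    have hbr_nonneg : 0 ≤ (ε ^ 3)⁻¹ * (c * ε) - (ε ^ 3)⁻¹ * (c * r1) := by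
      have : c * r1 ≤ c * ε := by nlinarith
      have h7 : (0:ℝ) < (ε ^ 3)⁻¹ := by positivity
      nlinarith
    have hstep : (∫ y : E3, F y)
        ≤ (ε⁻¹) ^ 2 * I + (I / (c * ρ)) * ((ε ^ 3)⁻¹ * (c * ε) - (ε ^ 3)⁻¹ * (c * r1)) := by
      rw [hFval]
      exact add_le_add (le_refl _) (mul_le_mul_of_nonneg_right hζv_le hbr_nonneg)
    have hkey : ε - r1 ≤ 2 * ε - ‖x‖ := by
      have := le_max_left (‖x‖ - ε) (0:ℝ)
      linarith
    have harith : (ε⁻¹) ^ 2 * I + (I / (c * ρ)) * ((ε ^ 3)⁻¹ * (c * ε) - (ε ^ 3)⁻¹ * (c * r1))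
        ≤ 4 * I / ‖x‖ ^ 2 := by
      have h1 : (I / (c * ρ)) * ((ε ^ 3)⁻¹ * (c * ε) - (ε ^ 3)⁻¹ * (c * r1))
          = I * (ε - r1) / (ρ * ε ^ 3) := by
        field_simp
      rw [h1]
      have h2 : I * (ε - r1) / (ρ * ε ^ 3) ≤ I * (2 * ε - ‖x‖) / (ρ * ε ^ 3) := by
        apply div_le_div_of_nonneg_right _ (by positivity)
        nlinarith
      have h3 : (ε⁻¹) ^ 2 * I + I * (2 * ε - ‖x‖) / (ρ * ε ^ 3) ≤ 4 * I / ‖x‖ ^ 2 := by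
        have hexpand : (ε⁻¹) ^ 2 * I + I * (2 * ε - ‖x‖) / (ρ * ε ^ 3)
            = I * (4 * ε - ‖x‖) / (ε ^ 2 * ‖x‖) := by
          rw [hρ]
          field_simp
          ring
        rw [hexpand, div_le_div_iff₀ (by positivity) (by positivity)]
        nlinarith [mul_nonneg (mul_nonneg hI0 ha.le) (sq_nonneg (‖x‖ - 2 * ε))]
      linarith
    linarith [hJ, hstep, harith]
end
end

section
/- Let ζ be a nonnegative, radial, radially nonincreasing function on ℝ³ with supp(ζ) ⊂ B(0,1), ∫_{ℝ³} ζ = 1, and I := ∫_{ℝ³} ζ(y)/|y|² dy < ∞; set ζ_ε(z) := ε^{-3} ζ(z/ε) and ∇V^ε(X) := ∫_{ℝ³} ζ_ε(z) ∇V(X−z) dz. Let u : ℝ³ → ℝ³ be Lipschitz with Lipschitz constant L. Then for every ε > 0 and all x₁ ≠ x₂ ∈ ℝ³, |(u(x₁) − u(x₂)) · ∇V^ε(x₁ − x₂)| ≤ 4 I L · V(x₁ − x₂). -/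
open MeasureTheory Real
open scoped ENNReal NNReal RealInnerProductSpace

noncomputable section

/-- The repulsive Coulomb potential `V(z) = 1/(4π|z|)` on `ℝ³`. -/
def V (z : E3) : ℝ := (4 * π * ‖z‖)⁻¹

/-- The gradient `∇V(z) = −z/(4π|z|³)` of the Coulomb potential, for `z ≠ 0`. -/
def gradV (z : E3) : E3 := (-(4 * π * ‖z‖ ^ 3)⁻¹) • z

/-- The mollified gradient `∇V^ε(X) = ∫ ζ_ε(z) ∇V(X−z) dz`,
where `ζ_ε(z) = ε⁻³ ζ(z/ε)`. -/
def gradVeps (ζ : E3 → ℝ) (ε : ℝ) (X : E3) : E3 :=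
  ∫ z : E3, ((ε ^ 3)⁻¹ * ζ (ε⁻¹ • z)) • gradV (X - z)

private lemma swap_ineq {p q s t : ℝ} (hpq : q ≤ p) (hts : t ≤ s) :
    p * t + q * s ≤ p * s + q * t := by
  nlinarith [mul_nonneg (sub_nonneg.2 hpq) (sub_nonneg.2 hts)]

set_option maxHeartbeats 1000000 in
theorem statement5
    (ζ : E3 → ℝ) (hζ_meas : Measurable ζ)
    (hζ_nonneg : ∀ x, 0 ≤ ζ x)
    (hζ_radial : ∀ x y : E3, ‖x‖ = ‖y‖ → ζ x = ζ y)
    (hζ_mono : ∀ x y : E3, ‖x‖ ≤ ‖y‖ → ζ y ≤ ζ x)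
    (hζ_supp : Function.support ζ ⊆ Metric.ball (0 : E3) 1)
    (hζ_mass : ∫ x, ζ x = 1)
    (I : ℝ) (hI_int : Integrable fun y : E3 => ζ y / ‖y‖ ^ 2)
    (hI : ∫ y : E3, ζ y / ‖y‖ ^ 2 = I)
    (u : E3 → E3) (L : ℝ≥0) (hu_lip : LipschitzWith L u) :
    ∀ ε > (0 : ℝ), ∀ x₁ x₂ : E3, x₁ ≠ x₂ →
      |⟪u x₁ - u x₂, gradVeps ζ ε (x₁ - x₂)⟫| ≤ 4 * I * L * V (x₁ - x₂) := by
  intro ε hε x₁ x₂ hne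
  set X : E3 := x₁ - x₂ with hXdef
  have hX : X ≠ 0 := sub_ne_zero.2 hne
  have hXn : (0:ℝ) < ‖X‖ := norm_pos_iff.2 hX
  have hπ : (0:ℝ) < π := pi_pos
  have hεne : ε ≠ 0 := ne_of_gt hε
  -- the mollifier ζ_ε
  set a : E3 → ℝ := fun z => (ε ^ 3)⁻¹ * ζ (ε⁻¹ • z) with ha_def
  have ha_nonneg : ∀ z, 0 ≤ a z := fun z =>
    mul_nonneg (inv_nonneg.2 (by positivity)) (hζ_nonneg _)
  have ha_meas : Measurable a :=
    (hζ_meas.comp (measurable_id.const_smul ε⁻¹)).const_mul _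
  have ha_supp : ∀ z : E3, ε ≤ ‖z‖ → a z = 0 := by
    intro z hz
    have hz0 : ζ (ε⁻¹ • z) = 0 := by
      by_contra h
      have hmem := hζ_supp (Function.mem_support.2 h)
      rw [Metric.mem_ball, dist_zero_right, norm_smul, norm_inv, Real.norm_eq_abs,
        abs_of_pos hε] at hmem
      have : ‖z‖ < ε := by
        have := (mul_lt_mul_of_pos_left hmem hε)
        calc ‖z‖ = ε * (ε⁻¹ * ‖z‖) := by field_simp
          _ < ε * 1 := this
          _ = ε := mul_one ε
      linarith
    simp [ha_def, hz0]
  have ha_mono : ∀ z w : E3, ‖z‖ ≤ ‖w‖ → a w ≤ a z := by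
    intro z w h
    have h' : ‖ε⁻¹ • z‖ ≤ ‖ε⁻¹ • w‖ := by
      rw [norm_smul, norm_smul]
      exact mul_le_mul_of_nonneg_left h (norm_nonneg _)
    exact mul_le_mul_of_nonneg_left (hζ_mono _ _ h') (inv_nonneg.2 (by positivity))
  -- ζ is integrable
  have hζ_int : Integrable ζ := by
    by_contra h
    rw [integral_undef h] at hζ_mass
    norm_num at hζ_mass
  -- a.e. avoidance of points
  have hae_ne : ∀ c : E3, ∀ᵐ z : E3, z ≠ c := by
    intro c
    refine ae_iff.2 ?_
    simpa using measure_singleton c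
  -- I ≥ 1
  have hI1 : (1:ℝ) ≤ I := by
    rw [← hI, ← hζ_mass]
    refine integral_mono_ae hζ_int hI_int ?_
    filter_upwards [hae_ne 0] with z hz
    by_cases hzs : ζ z = 0
    · simp [hzs]
    · have h1 : ‖z‖ < 1 := by
        have := hζ_supp (Function.mem_support.2 hzs)
        rwa [Metric.mem_ball, dist_zero_right] at this
      have h0 : (0:ℝ) < ‖z‖ := norm_pos_iff.2 hz
      have hinv : (1:ℝ) ≤ (‖z‖ ^ 2)⁻¹ :=
        (one_le_inv₀ (pow_pos h0 2)).2 (by nlinarith)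
      calc ζ z = ζ z * 1 := (mul_one _).symm
        _ ≤ ζ z * (‖z‖ ^ 2)⁻¹ := mul_le_mul_of_nonneg_left hinv (hζ_nonneg z)
        _ = ζ z / ‖z‖ ^ 2 := (div_eq_mul_inv _ _).symm
  have hI0 : (0:ℝ) ≤ I := by linarith
  -- scaling identities
  have hnorm_sq : ∀ z : E3, (‖ε⁻¹ • z‖ ^ 2)⁻¹ = ε ^ 2 * (‖z‖ ^ 2)⁻¹ := by
    intro z
    rw [norm_smul, Real.norm_eq_abs, abs_of_pos (inv_pos.2 hε), mul_pow, mul_inv,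
      inv_pow, inv_inv]
  have hcomp_int : Integrable (fun z : E3 => ζ (ε⁻¹ • z) / ‖ε⁻¹ • z‖ ^ 2) :=
    (integrable_comp_smul_iff volume (fun y : E3 => ζ y / ‖y‖ ^ 2) (inv_ne_zero hεne)).2 hI_int
  have hC_eq : ∀ z : E3, a z * (‖z‖ ^ 2)⁻¹
      = (ε ^ 5)⁻¹ * (ζ (ε⁻¹ • z) / ‖ε⁻¹ • z‖ ^ 2) := by
    intro z
    have hA : (ε ^ 3)⁻¹ = ε ^ 2 * (ε ^ 5)⁻¹ := by
      field_simp
    rw [div_eq_mul_inv, hnorm_sq z]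
    simp only [ha_def]
    rw [hA]
    ring
  have hC_int : Integrable (fun z : E3 => a z * (‖z‖ ^ 2)⁻¹) := by
    refine (hcomp_int.const_mul ((ε ^ 5)⁻¹)).congr (ae_of_all _ fun z => ?_)
    exact (hC_eq z).symm
  have hC_val : ∫ z : E3, a z * (‖z‖ ^ 2)⁻¹ = I / ε ^ 2 := by
    have h2 : ∫ z : E3, ζ (ε⁻¹ • z) / ‖ε⁻¹ • z‖ ^ 2 = ε ^ 3 * I := by
      have h3 := Measure.integral_comp_inv_smul volume (fun y : E3 => ζ y / ‖y‖ ^ 2) ε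
      rw [hI] at h3
      simpa [abs_of_pos (pow_pos hε 3), smul_eq_mul] using h3
    calc ∫ z : E3, a z * (‖z‖ ^ 2)⁻¹
        = ∫ z : E3, (ε ^ 5)⁻¹ * (ζ (ε⁻¹ • z) / ‖ε⁻¹ • z‖ ^ 2) := by simp_rw [hC_eq]
      _ = (ε ^ 5)⁻¹ * ∫ z : E3, ζ (ε⁻¹ • z) / ‖ε⁻¹ • z‖ ^ 2 := integral_const_mul _ _
      _ = (ε ^ 5)⁻¹ * (ε ^ 3 * I) := by rw [h2]
      _ = I / ε ^ 2 := by field_simp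
  have ha_int : Integrable a := by
    have := ((integrable_comp_smul_iff volume ζ (inv_ne_zero hεne)).2 hζ_int).const_mul ((ε ^ 3)⁻¹)
    exact this
  have ha_val : ∫ z : E3, a z = 1 := by
    have h2 : ∫ z : E3, ζ (ε⁻¹ • z) = ε ^ 3 := by
      have h3 := Measure.integral_comp_inv_smul volume ζ ε
      rw [hζ_mass] at h3
      simpa [abs_of_pos (pow_pos hε 3), smul_eq_mul] using h3
    simp only [ha_def]
    rw [integral_const_mul, h2]
    field_simp
  -- measurability
  have hmt : Measurable fun z : E3 => (‖X - z‖ ^ 2)⁻¹ :=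
    (((measurable_const.sub measurable_id).norm).pow_const 2).inv
  have hms : Measurable fun z : E3 => (‖z‖ ^ 2)⁻¹ := (measurable_norm.pow_const 2).inv
  have hmA : Measurable fun z : E3 => ENNReal.ofReal (a z * (‖X - z‖ ^ 2)⁻¹) :=
    (ha_meas.mul hmt).ennreal_ofReal
  have hmC : Measurable fun z : E3 => ENNReal.ofReal (a z * (‖z‖ ^ 2)⁻¹) :=
    (ha_meas.mul hms).ennreal_ofReal
  -- lintegral values
  have hKC : ∫⁻ z : E3, ENNReal.ofReal (a z * (‖z‖ ^ 2)⁻¹) = ENNReal.ofReal (I / ε ^ 2) := by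
    rw [← MeasureTheory.ofReal_integral_eq_lintegral_ofReal hC_int
      (ae_of_all _ fun z => mul_nonneg (ha_nonneg z) (by positivity)), hC_val]
  have hKa : ∫⁻ z : E3, ENNReal.ofReal (a z) = 1 := by
    rw [← MeasureTheory.ofReal_integral_eq_lintegral_ofReal ha_int (ae_of_all _ ha_nonneg),
      ha_val, ENNReal.ofReal_one]
  -- the rearrangement-type inequality
  have hkey : ∫⁻ z : E3, ENNReal.ofReal (a z * (‖X - z‖ ^ 2)⁻¹)
      ≤ ∫⁻ z : E3, ENNReal.ofReal (a z * (‖z‖ ^ 2)⁻¹) := by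
    have hBA : ∫⁻ z : E3, ENNReal.ofReal (a (X - z) * (‖z‖ ^ 2)⁻¹)
        = ∫⁻ z : E3, ENNReal.ofReal (a z * (‖X - z‖ ^ 2)⁻¹) := by
      have h3 := (Measure.measurePreserving_sub_left (volume : Measure E3) X).lintegral_comp hmA
      simpa [sub_sub_cancel] using h3
    have hDC : ∫⁻ z : E3, ENNReal.ofReal (a (X - z) * (‖X - z‖ ^ 2)⁻¹)
        = ∫⁻ z : E3, ENNReal.ofReal (a z * (‖z‖ ^ 2)⁻¹) := by
      have h3 := (Measure.measurePreserving_sub_left (volume : Measure E3) X).lintegral_comp hmC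
      simpa [sub_sub_cancel] using h3
    have hsum : (∫⁻ z : E3, ENNReal.ofReal (a z * (‖X - z‖ ^ 2)⁻¹))
          + (∫⁻ z : E3, ENNReal.ofReal (a (X - z) * (‖z‖ ^ 2)⁻¹))
        ≤ (∫⁻ z : E3, ENNReal.ofReal (a z * (‖z‖ ^ 2)⁻¹))
          + (∫⁻ z : E3, ENNReal.ofReal (a (X - z) * (‖X - z‖ ^ 2)⁻¹)) := by
      rw [← lintegral_add_left hmA, ← lintegral_add_left hmC]
      refine lintegral_mono_ae ?_
      filter_upwards [hae_ne 0, hae_ne X] with z hz0 hzX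
      rw [← ENNReal.ofReal_add (mul_nonneg (ha_nonneg _) (by positivity))
          (mul_nonneg (ha_nonneg _) (by positivity)),
        ← ENNReal.ofReal_add (mul_nonneg (ha_nonneg _) (by positivity))
          (mul_nonneg (ha_nonneg _) (by positivity))]
      refine ENNReal.ofReal_le_ofReal ?_
      have hz0' : (0:ℝ) < ‖z‖ := norm_pos_iff.2 hz0
      have hzX' : (0:ℝ) < ‖X - z‖ := norm_pos_iff.2 (sub_ne_zero.2 (Ne.symm hzX))
      rcases le_total ‖z‖ ‖X - z‖ with h | h
      · have hpq : a (X - z) ≤ a z := ha_mono _ _ h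
        have hts : (‖X - z‖ ^ 2)⁻¹ ≤ (‖z‖ ^ 2)⁻¹ :=
          inv_anti₀ (pow_pos hz0' 2) (pow_le_pow_left₀ (norm_nonneg _) h 2)
        linarith [swap_ineq hpq hts]
      · have hpq : a z ≤ a (X - z) := ha_mono _ _ h
        have hts : (‖z‖ ^ 2)⁻¹ ≤ (‖X - z‖ ^ 2)⁻¹ :=
          inv_anti₀ (pow_pos hzX' 2) (pow_le_pow_left₀ (norm_nonneg _) h 2)
        linarith [swap_ineq hpq hts]
    rw [hBA, hDC] at hsum
    have h2 : 2 * (∫⁻ z : E3, ENNReal.ofReal (a z * (‖X - z‖ ^ 2)⁻¹))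
        ≤ 2 * (∫⁻ z : E3, ENNReal.ofReal (a z * (‖z‖ ^ 2)⁻¹)) := by
      rw [two_mul, two_mul]
      exact hsum
    exact (ENNReal.mul_le_mul_iff_right (by norm_num) (by norm_num)).1 h2
  -- the main lintegral bound
  have hmain : ∫⁻ z : E3, ENNReal.ofReal (a z * (‖X - z‖ ^ 2)⁻¹)
      ≤ ENNReal.ofReal (4 * I / ‖X‖ ^ 2) := by
    rcases le_or_gt ‖X‖ (2 * ε) with hcase | hcase
    · calc ∫⁻ z : E3, ENNReal.ofReal (a z * (‖X - z‖ ^ 2)⁻¹)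
          ≤ ∫⁻ z : E3, ENNReal.ofReal (a z * (‖z‖ ^ 2)⁻¹) := hkey
        _ = ENNReal.ofReal (I / ε ^ 2) := hKC
        _ ≤ ENNReal.ofReal (4 * I / ‖X‖ ^ 2) := by
            apply ENNReal.ofReal_le_ofReal
            rw [div_le_div_iff₀ (by positivity) (by positivity)]
            have h5 : ‖X‖ ^ 2 ≤ 4 * ε ^ 2 := by nlinarith
            nlinarith [mul_le_mul_of_nonneg_left h5 hI0]
    · have hpt : ∀ z : E3, a z * (‖X - z‖ ^ 2)⁻¹ ≤ 4 / ‖X‖ ^ 2 * a z := by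
        intro z
        rcases le_or_gt ε ‖z‖ with hz | hz
        · simp [ha_supp z hz]
        · have h1 : ‖X‖ / 2 ≤ ‖X - z‖ := by
            have h4 := norm_sub_norm_le X z
            linarith
          have h2 : (‖X - z‖ ^ 2)⁻¹ ≤ 4 / ‖X‖ ^ 2 := by
            calc (‖X - z‖ ^ 2)⁻¹ ≤ ((‖X‖ / 2) ^ 2)⁻¹ := by
                  apply inv_anti₀ (by positivity)
                  nlinarith
              _ = 4 / ‖X‖ ^ 2 := by rw [div_pow, inv_div]; norm_num
          calc a z * (‖X - z‖ ^ 2)⁻¹ ≤ a z * (4 / ‖X‖ ^ 2) :=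
                mul_le_mul_of_nonneg_left h2 (ha_nonneg z)
            _ = 4 / ‖X‖ ^ 2 * a z := mul_comm _ _
      calc ∫⁻ z : E3, ENNReal.ofReal (a z * (‖X - z‖ ^ 2)⁻¹)
          ≤ ∫⁻ z : E3, ENNReal.ofReal (4 / ‖X‖ ^ 2 * a z) :=
            lintegral_mono fun z => ENNReal.ofReal_le_ofReal (hpt z)
        _ = ENNReal.ofReal (4 / ‖X‖ ^ 2) * ∫⁻ z : E3, ENNReal.ofReal (a z) := by
            simp_rw [ENNReal.ofReal_mul (by positivity : (0:ℝ) ≤ 4 / ‖X‖ ^ 2)]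
            exact lintegral_const_mul _ ha_meas.ennreal_ofReal
        _ = ENNReal.ofReal (4 / ‖X‖ ^ 2) := by rw [hKa, mul_one]
        _ ≤ ENNReal.ofReal (4 * I / ‖X‖ ^ 2) := by
            apply ENNReal.ofReal_le_ofReal
            gcongr
            nlinarith
  -- norm of the integrand
  have hg : ∀ w : E3, ‖gradV w‖ = (4 * π)⁻¹ * (‖w‖ ^ 2)⁻¹ := by
    intro w
    rcases eq_or_ne w 0 with rfl | hw
    · simp [gradV]
    · have h0 : ‖w‖ ≠ 0 := norm_ne_zero_iff.2 hw
      rw [gradV, norm_smul, Real.norm_eq_abs, abs_neg, abs_of_nonneg (by positivity)]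
      field_simp
  have hFnorm : ∀ z : E3, ‖a z • gradV (X - z)‖ = (4 * π)⁻¹ * (a z * (‖X - z‖ ^ 2)⁻¹) := by
    intro z
    rw [norm_smul, Real.norm_eq_abs, abs_of_nonneg (ha_nonneg z), hg]
    ring
  -- assembling
  have hw : ‖u x₁ - u x₂‖ ≤ (L : ℝ) * ‖X‖ := by
    have := hu_lip.dist_le_mul x₁ x₂
    simpa [dist_eq_norm, hXdef] using this
  have hbound_nonneg : (0:ℝ) ≤ (4 * π)⁻¹ * (4 * I / ‖X‖ ^ 2) :=
    mul_nonneg (by positivity) (div_nonneg (by linarith) (by positivity))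
  have hnorm_int : ‖gradVeps ζ ε X‖ ≤ (4 * π)⁻¹ * (4 * I / ‖X‖ ^ 2) := by
    have h1 : ‖gradVeps ζ ε X‖
        ≤ (∫⁻ z : E3, ENNReal.ofReal ‖a z • gradV (X - z)‖).toReal := by
      simp only [gradVeps]
      exact norm_integral_le_lintegral_norm _
    refine h1.trans ?_
    apply ENNReal.toReal_le_of_le_ofReal hbound_nonneg
    calc ∫⁻ z : E3, ENNReal.ofReal ‖a z • gradV (X - z)‖
        = ∫⁻ z : E3, ENNReal.ofReal ((4 * π)⁻¹) * ENNReal.ofReal (a z * (‖X - z‖ ^ 2)⁻¹) := by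
          refine lintegral_congr fun z => ?_
          rw [hFnorm z, ENNReal.ofReal_mul (by positivity)]
      _ = ENNReal.ofReal ((4 * π)⁻¹) * ∫⁻ z : E3, ENNReal.ofReal (a z * (‖X - z‖ ^ 2)⁻¹) :=
          lintegral_const_mul _ hmA
      _ ≤ ENNReal.ofReal ((4 * π)⁻¹) * ENNReal.ofReal (4 * I / ‖X‖ ^ 2) :=
          mul_le_mul_right hmain _
      _ = ENNReal.ofReal ((4 * π)⁻¹ * (4 * I / ‖X‖ ^ 2)) :=
          (ENNReal.ofReal_mul (by positivity)).symm
  calc |⟪u x₁ - u x₂, gradVeps ζ ε X⟫|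
      ≤ ‖u x₁ - u x₂‖ * ‖gradVeps ζ ε X‖ := abs_real_inner_le_norm _ _
    _ ≤ ((L : ℝ) * ‖X‖) * ((4 * π)⁻¹ * (4 * I / ‖X‖ ^ 2)) :=
        mul_le_mul hw hnorm_int (norm_nonneg _) (by positivity)
    _ = 4 * I * L * V X := by
        have h9 : ∀ r : ℝ, 0 < r →
            (L : ℝ) * r * ((4 * π)⁻¹ * (4 * I / r ^ 2)) = 4 * I * L * (4 * π * r)⁻¹ := by
          intro r hr
          field_simp [hr.ne', pi_ne_zero]
        have hV : V X = (4 * π * ‖X‖)⁻¹ := rfl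
        rw [hV]
        exact h9 ‖X‖ hXn
end
end

section
/- For all x ≠ y in ℝ³, one has the smooth Fefferman–de la Llave representation of the Coulomb potential: 1/(4π|x−y|) = ∫_0^∞ ∫_{ℝ³} G_r(x−z) G_r(y−z) dz dr, where G_r(x) := (2πr)^{-3/2} exp(−|x|²/(2r)). -/
open MeasureTheory Real
open scoped ENNReal

noncomputable section

/-- The heat kernel `G_r(x) = (2πr)^{-3/2} exp(−|x|²/(2r))` on `ℝ³`. -/
def G (r : ℝ) (x : E3) : ℝ := (2 * π * r) ^ (-(3 : ℝ) / 2) * Real.exp (-‖x‖ ^ 2 / (2 * r))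

/-! The Coulomb kernel is the time integral of the heat kernel run at doubled speed. Completing the
square around the midpoint of `x` and `y` gives the semigroup identity
`∫ G_r(x - z) G_r(y - z) dz = G_{2r}(x - y)`, and the substitution `t = 1/r` turns
`∫₀^∞ G_r(w) dr` into Euler's integral for `Γ(1/2) = √π`, which evaluates it to `1/(2π|w|)`. -/

open Set

theorem integral_rpow_neg_mul_exp_neg_div_Ioi {s c : ℝ} (hs : 0 < s) (hc : 0 < c) :
    ∫ r in Ioi 0, r ^ (-s - 1) * exp (-c / r) = Gamma s * c ^ (-s) := by
  have hsubst := integral_comp_rpow_Ioi (fun t : ℝ => t ^ (s - 1) * exp (-(c * t)))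
    (p := -1) (by norm_num)
  rw [integral_rpow_mul_exp_neg_mul_Ioi hs hc, one_div, inv_rpow hc.le, ← rpow_neg hc.le,
    mul_comm] at hsubst
  rw [← hsubst]
  refine setIntegral_congr_fun measurableSet_Ioi fun r (hr : 0 < r) => ?_
  rw [smul_eq_mul, abs_neg, abs_one, one_mul, rpow_neg_one, inv_rpow hr.le, ← rpow_neg hr.le,
    ← mul_assoc, ← rpow_add hr, neg_div, div_eq_mul_inv]
  ring_nf

theorem G_eq_rpow_mul_exp {r : ℝ} (hr : 0 < r) (w : E3) :
    G r w = (2 * π) ^ (-(3 : ℝ) / 2) * (r ^ (-(1 / 2 : ℝ) - 1) * exp (-(‖w‖ ^ 2 / 2) / r)) := by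
  rw [G, mul_rpow (by positivity) hr.le]
  ring_nf

theorem integral_G_Ioi {w : E3} (hw : w ≠ 0) :
    ∫ r in Ioi 0, G r w = 2 * V w := by
  have hw' : 0 < ‖w‖ := norm_pos_iff.mpr hw
  rw [setIntegral_congr_fun measurableSet_Ioi fun r hr => G_eq_rpow_mul_exp hr w,
    integral_const_mul, integral_rpow_neg_mul_exp_neg_div_Ioi one_half_pos (by positivity),
    Gamma_one_half_eq, V]
  have hsqrt : ∀ {a : ℝ}, 0 ≤ a → a ^ (-(1 / 2 : ℝ)) = (√a)⁻¹ := fun ha => by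
    rw [rpow_neg ha, ← sqrt_eq_rpow]
  rw [show -(3 : ℝ) / 2 = -1 + -(1 / 2) by norm_num, rpow_add (by positivity), rpow_neg_one,
    hsqrt (by positivity), hsqrt (by positivity), sqrt_div' _ zero_le_two, sqrt_sq hw'.le,
    sqrt_mul zero_le_two]
  field_simp
  norm_num

theorem G_mul_G (r : ℝ) (a b : E3) :
    G r a * G r b = (2 * π * r) ^ (-(3 : ℝ) / 2) * (2 * π * r) ^ (-(3 : ℝ) / 2) *
      (exp (-‖a - b‖ ^ 2 / (4 * r)) * exp (-‖a + b‖ ^ 2 / (4 * r))) := by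
  have hpar := parallelogram_law_with_norm ℝ a b
  rw [G, G, mul_mul_mul_comm, ← exp_add, ← exp_add]
  congr 2
  linear_combination (4 * r)⁻¹ * hpar

theorem integral_G_mul_G {r : ℝ} (hr : 0 < r) (x y : E3) :
    ∫ z, G r (x - z) * G r (y - z) = G (2 * r) (x - y) := by
  set m : E3 := (2 : ℝ)⁻¹ • (x + y)
  have hsum : ∀ z, -‖(x - z) + (y - z)‖ ^ 2 / (4 * r) = -r⁻¹ * ‖m - z‖ ^ 2 := fun z => by
    rw [show (x - z) + (y - z) = (2 : ℝ) • (m - z) by module, norm_smul]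
    field_simp
    norm_num
    ring
  simp_rw [G_mul_G, sub_sub_sub_cancel_right, hsum]
  rw [integral_const_mul, integral_const_mul,
    integral_sub_left_eq_self (fun z => exp (-r⁻¹ * ‖z‖ ^ 2)) volume m,
    GaussianFourier.integral_rexp_neg_mul_sq_norm (inv_pos.mpr hr), finrank_euclideanSpace,
    Fintype.card_fin]
  have ha : 0 < 2 * π * r := by positivity
  rw [G, Nat.cast_ofNat, show π / r⁻¹ = 2 * π * r / 2 by field_simp,
    show 2 * π * (2 * r) = 2 * (2 * π * r) by ring, show 2 * (2 * r) = 4 * r by ring,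
    mul_rpow zero_le_two ha.le, div_rpow ha.le zero_le_two, neg_div, rpow_neg ha.le,
    rpow_neg zero_le_two]
  field_simp

theorem statement6 (x y : E3) (hxy : x ≠ y) :
    V (x - y) = ∫ r in Set.Ioi (0 : ℝ), ∫ z : E3, G r (x - z) * G r (y - z) := by
  rw [setIntegral_congr_fun measurableSet_Ioi fun r hr => integral_G_mul_G hr x y,
    integral_comp_mul_left_Ioi (fun r => G r (x - y)) 0 two_pos, mul_zero,
    integral_G_Ioi (sub_ne_zero.mpr hxy), smul_eq_mul]
  ring
end
end

section
/- Fefferman–de la Llave representation: for all x ≠ y in ℝ³, one has 1/(4π|x−y|) = (1/(4π²)) ∫_0^∞ r^{-5} vol( B(x,r) ∩ B(y,r) ) dr, where vol denotes Lebesgue measure on ℝ³ and B(x,r) the open ball of center x and radius r; equivalently, the inner quantity is ∫_{ℝ³} 1_{|x−z|<r} 1_{|y−z|<r} dz. -/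
open MeasureTheory Real
open scoped ENNReal

noncomputable section

-- area of a disc, in (Fin 2 → ℝ)
lemma area_disc (c : ℝ) :
    volume {ξ : Fin 2 → ℝ | ξ 0 ^ 2 + ξ 1 ^ 2 < c} = ENNReal.ofReal (π * c) := by
  rcases le_or_gt c 0 with hc | hc
  · have h1 : {ξ : Fin 2 → ℝ | ξ 0 ^ 2 + ξ 1 ^ 2 < c} = ∅ := by
      ext ξ
      simp only [Set.mem_setOf_eq, Set.mem_empty_iff_false, iff_false, not_lt]
      nlinarith [sq_nonneg (ξ 0), sq_nonneg (ξ 1)]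
    rw [h1, measure_empty]
    symm
    rw [ENNReal.ofReal_eq_zero]
    nlinarith [pi_pos]
  · have hmeas : MeasurableSet {ξ : Fin 2 → ℝ | ξ 0 ^ 2 + ξ 1 ^ 2 < c} := by
      apply measurableSet_lt _ measurable_const
      fun_prop
    rw [← (EuclideanSpace.volume_preserving_symm_measurableEquiv_toLp (Fin 2)).measure_preimage
      hmeas.nullMeasurableSet]
    have hset : (MeasurableEquiv.toLp 2 (Fin 2 → ℝ)).symm ⁻¹' {ξ | ξ 0 ^ 2 + ξ 1 ^ 2 < c}
        = Metric.ball (0 : EuclideanSpace ℝ (Fin 2)) (Real.sqrt c) := by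
      ext w
      simp only [Set.mem_preimage, Set.mem_setOf_eq, Metric.mem_ball, dist_zero_right,
        EuclideanSpace.norm_eq]
      have h0 : (MeasurableEquiv.toLp 2 (Fin 2 → ℝ)).symm w 0 = w 0 := rfl
      have h1 : (MeasurableEquiv.toLp 2 (Fin 2 → ℝ)).symm w 1 = w 1 := rfl
      rw [h0, h1, Fin.sum_univ_two, ← Real.sqrt_lt_sqrt_iff (by positivity)]
      simp [sq_abs]
    rw [hset, EuclideanSpace.volume_ball]
    have hcard : Fintype.card (Fin 2) = 2 := by simp
    rw [hcard]
    have hg : Real.Gamma ((2 : ℕ) / 2 + 1) = 1 := by norm_num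
    rw [hg, div_one, Real.sq_sqrt pi_nonneg, ← ENNReal.ofReal_pow (Real.sqrt_nonneg c),
      Real.sq_sqrt hc.le, ← ENNReal.ofReal_mul hc.le, mul_comm]

lemma lens_vol (d r : ℝ) (hd : 0 < d) (hr : 0 < r) (hdr : d < 2 * r) :
    volume (Metric.ball (0 : E3) r ∩ Metric.ball (EuclideanSpace.single (0 : Fin 3) d) r)
      = ENNReal.ofReal (π / 12 * (16 * r ^ 3 - 12 * d * r ^ 2 + d ^ 3)) := by
  set S' : Set (Fin 3 → ℝ) :=
    {f | f 0 ^ 2 + f 1 ^ 2 + f 2 ^ 2 < r ^ 2 ∧ (f 0 - d) ^ 2 + f 1 ^ 2 + f 2 ^ 2 < r ^ 2} with hS'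
  have hS'meas : MeasurableSet S' := by
    rw [hS', Set.setOf_and]
    exact (measurableSet_lt (by fun_prop) measurable_const).inter
      (measurableSet_lt (by fun_prop) measurable_const)
  -- step 1 : identify with S'
  have step1 : volume (Metric.ball (0 : E3) r ∩
      Metric.ball (EuclideanSpace.single (0 : Fin 3) d) r) = volume S' := by
    rw [← (EuclideanSpace.volume_preserving_symm_measurableEquiv_toLp (Fin 3)).measure_preimage
      hS'meas.nullMeasurableSet]
    congr 1
    ext z
    have hz : ∀ i, (MeasurableEquiv.toLp 2 (Fin 3 → ℝ)).symm z i = z i := fun _ => rfl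
    simp only [Set.mem_preimage, hS', Set.mem_setOf_eq, hz, Set.mem_inter_iff, Metric.mem_ball,
      dist_zero_right, EuclideanSpace.norm_eq, EuclideanSpace.dist_eq, Fin.sum_univ_three,
      EuclideanSpace.single_apply]
    rw [Real.sqrt_lt' hr, Real.sqrt_lt' hr]
    simp only [Real.dist_eq, sq_abs]
    norm_num [Real.norm_eq_abs, sq_abs, Fin.ext_iff]
  set c : ℝ → ℝ := fun t => min (r ^ 2 - t ^ 2) (r ^ 2 - (t - d) ^ 2) with hcdef
  set T := MeasurableEquiv.piFinSuccAbove (fun _ : Fin 3 => ℝ) 0 with hT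
  set S'' : Set (ℝ × (Fin 2 → ℝ)) := {p | p.2 0 ^ 2 + p.2 1 ^ 2 < c p.1} with hS''
  have hS''meas : MeasurableSet S'' := by
    apply measurableSet_lt (by fun_prop)
    apply Measurable.min <;> fun_prop
  have step2 : volume S' = volume S'' := by
    rw [← ((volume_preserving_piFinSuccAbove (fun _ : Fin 3 => ℝ) 0).symm T).measure_preimage
      hS'meas.nullMeasurableSet]
    congr 1
    ext p
    obtain ⟨t, ξ⟩ := p
    have hts : T.symm (t, ξ) = Fin.cons t ξ := by
      rw [hT]
      simp [MeasurableEquiv.piFinSuccAbove, Fin.insertNthEquiv, Fin.insertNth_zero']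
    have h0 : (Fin.cons t ξ : Fin 3 → ℝ) 0 = t := rfl
    have h1 : (Fin.cons t ξ : Fin 3 → ℝ) 1 = ξ 0 := rfl
    have h2 : (Fin.cons t ξ : Fin 3 → ℝ) 2 = ξ 1 := rfl
    simp only [Set.mem_preimage, hS', Set.mem_setOf_eq, hts, h0, h1, h2, hS'', hcdef, lt_min_iff]
    constructor
    · rintro ⟨hA, hB⟩
      exact ⟨by linarith, by linarith⟩
    · rintro ⟨hA, hB⟩
      exact ⟨by linarith, by linarith⟩
  have step3 : volume S'' = ∫⁻ t : ℝ, ENNReal.ofReal (π * c t) := by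
    rw [show (volume : Measure (ℝ × (Fin 2 → ℝ))) = Measure.prod volume volume from rfl,
      Measure.prod_apply hS''meas]
    congr 1
    ext t
    have : Prod.mk t ⁻¹' S'' = {ξ : Fin 2 → ℝ | ξ 0 ^ 2 + ξ 1 ^ 2 < c t} := rfl
    rw [this, area_disc]
  set g : ℝ → ℝ := fun t => π * max (c t) 0 with hgdef
  have hcc : Continuous c := by
    rw [hcdef]
    exact Continuous.min (by continuity) (by continuity)
  have hgc : Continuous g := continuous_const.mul (hcc.max continuous_const)
  have step4 : ∫⁻ t : ℝ, ENNReal.ofReal (π * c t) = ∫⁻ t : ℝ, ENNReal.ofReal (g t) := by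
    apply lintegral_congr
    intro t
    rcases le_total (c t) 0 with h | h
    · rw [hgdef]
      simp only
      rw [max_eq_right h, mul_zero, ENNReal.ofReal_eq_zero.mpr (by nlinarith [pi_pos]),
        ENNReal.ofReal_zero]
    · rw [hgdef]
      simp only [max_eq_left h]
  have hsupp : HasCompactSupport g := by
    apply HasCompactSupport.intro (isCompact_Icc (a := -r) (b := r))
    intro t ht
    simp only [Set.mem_Icc, not_and_or, not_le] at ht
    have h1 : c t ≤ 0 := by
      refine le_trans (min_le_left _ _) ?_
      rcases ht with h | h
      · nlinarith
      · nlinarith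
    rw [hgdef]
    simp only
    rw [max_eq_right h1, mul_zero]
  have hint : Integrable g := hgc.integrable_of_hasCompactSupport hsupp
  have step5 : ∫⁻ t : ℝ, ENNReal.ofReal (g t) = ENNReal.ofReal (∫ t : ℝ, g t) := by
    rw [← MeasureTheory.ofReal_integral_eq_lintegral_ofReal hint]
    exact Filter.Eventually.of_forall fun t =>
      mul_nonneg pi_pos.le (le_max_right _ _)
  have hval : ∫ t : ℝ, g t = π / 12 * (16 * r ^ 3 - 12 * d * r ^ 2 + d ^ 3) := by
    have hgind : g = Set.indicator (Set.Icc (d - r) r) (fun t => π * c t) := by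
      funext t
      by_cases ht : t ∈ Set.Icc (d - r) r
      · rw [Set.indicator_of_mem ht]
        obtain ⟨ht1, ht2⟩ := ht
        have h0 : 0 ≤ c t := le_min (by nlinarith) (by nlinarith)
        rw [hgdef]
        simp only
        rw [max_eq_left h0]
      · rw [Set.indicator_of_notMem ht]
        simp only [Set.mem_Icc, not_and_or, not_le] at ht
        have h1 : c t ≤ 0 := by
          rcases ht with h | h
          · exact le_trans (min_le_right _ _) (by nlinarith)
          · exact le_trans (min_le_left _ _) (by nlinarith)
        rw [hgdef]
        simp only
        rw [max_eq_right h1, mul_zero]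
    rw [hgind, MeasureTheory.integral_indicator measurableSet_Icc,
      MeasureTheory.integral_Icc_eq_integral_Ioc,
      ← intervalIntegral.integral_of_le (by linarith : d - r ≤ r)]
    have hii : ∀ a b : ℝ, IntervalIntegrable (fun t => π * c t) volume a b :=
      fun a b => (continuous_const.mul hcc).intervalIntegrable a b
    rw [← intervalIntegral.integral_add_adjacent_intervals (hii (d - r) (d / 2)) (hii (d / 2) r)]
    have e1 : ∫ t in (d - r)..(d / 2), π * c t
        = ∫ t in (d - r)..(d / 2), π * (r ^ 2 - (t - d) ^ 2) := by
      apply intervalIntegral.integral_congr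
      intro t ht
      rw [Set.uIcc_of_le (by linarith)] at ht
      obtain ⟨ht1, ht2⟩ := ht
      have hm : min (r ^ 2 - t ^ 2) (r ^ 2 - (t - d) ^ 2) = r ^ 2 - (t - d) ^ 2 :=
        min_eq_right (by nlinarith)
      rw [hcdef]
      simp only
      rw [hm]
    have e2 : ∫ t in (d / 2)..r, π * c t = ∫ t in (d / 2)..r, π * (r ^ 2 - t ^ 2) := by
      apply intervalIntegral.integral_congr
      intro t ht
      rw [Set.uIcc_of_le (by linarith)] at ht
      obtain ⟨ht1, ht2⟩ := ht
      have hm : min (r ^ 2 - t ^ 2) (r ^ 2 - (t - d) ^ 2) = r ^ 2 - t ^ 2 :=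
        min_eq_left (by nlinarith)
      rw [hcdef]
      simp only
      rw [hm]
    have key : ∀ a b : ℝ, ∫ t in a..b, π * (r ^ 2 - t ^ 2)
        = π * ((r ^ 2 * b - b ^ 3 / 3) - (r ^ 2 * a - a ^ 3 / 3)) := by
      intro a b
      rw [intervalIntegral.integral_const_mul, intervalIntegral.integral_sub
        intervalIntegrable_const ((continuous_pow 2).intervalIntegrable a b),
        intervalIntegral.integral_const, integral_pow, smul_eq_mul]
      push_cast
      ring
    have e1' : ∫ t in (d - r)..(d / 2), π * (r ^ 2 - (t - d) ^ 2)
        = ∫ u in (d - r - d)..(d / 2 - d), π * (r ^ 2 - u ^ 2) :=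
      intervalIntegral.integral_comp_sub_right (fun u => π * (r ^ 2 - u ^ 2)) d
    rw [e1, e2, e1', key, key]
    ring
  rw [step1, step2, step3, step4, step5, hval]

lemma ball_inter_vol (x y : E3) (r : ℝ) (hxy : x ≠ y) (hr : 0 < r) :
    volume (Metric.ball x r ∩ Metric.ball y r)
      = ENNReal.ofReal (if ‖x - y‖ < 2 * r then
          π / 12 * (16 * r ^ 3 - 12 * ‖x - y‖ * r ^ 2 + ‖x - y‖ ^ 3) else 0) := by
  set d := ‖x - y‖ with hddef
  have hd : 0 < d := by
    rw [hddef, norm_pos_iff]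
    exact sub_ne_zero.mpr hxy
  by_cases hdr : d < 2 * r
  · rw [if_pos hdr]
    have htrans : volume (Metric.ball x r ∩ Metric.ball y r)
        = volume (Metric.ball (0 : E3) r ∩ Metric.ball (y - x) r) := by
      rw [← measure_preimage_add volume x (Metric.ball x r ∩ Metric.ball y r)]
      congr 1
      ext z
      have h1 : x + z - x = z - 0 := by abel
      have h2 : x + z - y = z - (y - x) := by abel
      simp only [Set.mem_preimage, Set.mem_inter_iff, Metric.mem_ball, dist_eq_norm, h1, h2]
    set e := d⁻¹ • (y - x) with hedef
    have hyx : ‖y - x‖ = d := by rw [hddef, norm_sub_rev]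
    have he : ‖e‖ = 1 := by
      rw [hedef, norm_smul, hyx, Real.norm_eq_abs, abs_of_pos (inv_pos.mpr hd)]
      field_simp
    have hcard : Module.finrank ℝ E3 = Fintype.card (Fin 3) := by simp
    have horth : Orthonormal ℝ (({0} : Set (Fin 3)).restrict (fun _ : Fin 3 => e)) := by
      constructor
      · intro i
        exact he
      · intro i j hij
        exact absurd (Subtype.ext ((Set.mem_singleton_iff.mp i.2).trans
          (Set.mem_singleton_iff.mp j.2).symm)) hij
    obtain ⟨b, hb⟩ := horth.exists_orthonormalBasis_extension_of_card_eq hcard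
    have hb0 : b 0 = e := hb 0 rfl
    set L := b.repr with hL
    have hLv : L (y - x) = EuclideanSpace.single (0 : Fin 3) d := by
      have hyx' : y - x = d • e := by
        rw [hedef, smul_smul, mul_inv_cancel₀ (ne_of_gt hd), one_smul]
      rw [hyx', _root_.map_smul, ← hb0, hL, b.repr_self]
      ext i
      simp [EuclideanSpace.single_apply, mul_ite]
    have hrot : volume (Metric.ball (0 : E3) r ∩ Metric.ball (y - x) r)
        = volume (Metric.ball (0 : E3) r ∩
            Metric.ball (EuclideanSpace.single (0 : Fin 3) d) r) := by
      have hpre : L ⁻¹' (Metric.ball (0 : EuclideanSpace ℝ (Fin 3)) r ∩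
          Metric.ball (EuclideanSpace.single (0 : Fin 3) d) r)
          = Metric.ball (0 : E3) r ∩ Metric.ball (y - x) r := by
        rw [Set.preimage_inter, L.preimage_ball, L.preimage_ball, ← hLv,
          LinearIsometryEquiv.symm_apply_apply, map_zero]
      rw [← hpre]
      exact L.measurePreserving.measure_preimage
        ((measurableSet_ball.inter measurableSet_ball).nullMeasurableSet)
    rw [htrans, hrot, lens_vol d r hd hr hdr]
  · rw [if_neg hdr]
    push_neg at hdr
    have hempty : Metric.ball x r ∩ Metric.ball y r = ∅ := by
      ext z
      simp only [Set.mem_inter_iff, Metric.mem_ball, Set.mem_empty_iff_false, iff_false, not_and,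
        not_lt]
      intro h1
      have h2 := dist_triangle x z y
      have h3 : dist x y = d := by rw [hddef, dist_eq_norm]
      have h4 : dist z x = dist x z := dist_comm z x
      linarith
    rw [hempty, measure_empty, ENNReal.ofReal_zero]

theorem statement19 (x y : E3) (hxy : x ≠ y) :
    (4 * π * ‖x - y‖)⁻¹
        = (1 / (4 * π ^ 2)) *
            ∫ r in Set.Ioi (0 : ℝ),
              (r ^ 5)⁻¹ * (volume (Metric.ball x r ∩ Metric.ball y r)).toReal ∧
      ∀ r : ℝ,
        (volume (Metric.ball x r ∩ Metric.ball y r)).toReal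
          = ∫ z : E3,
              Set.indicator (Metric.ball x r) (fun _ => (1 : ℝ)) z *
                Set.indicator (Metric.ball y r) (fun _ => (1 : ℝ)) z := by
  constructor
  · set d := ‖x - y‖ with hddef
    have hd : 0 < d := by
      rw [hddef, norm_pos_iff]
      exact sub_ne_zero.mpr hxy
    set F : ℝ → ℝ := fun r => (r ^ 5)⁻¹ * (π / 12 * (16 * r ^ 3 - 12 * d * r ^ 2 + d ^ 3))
      with hFdef
    have hvol : ∀ r : ℝ, 0 < r → (volume (Metric.ball x r ∩ Metric.ball y r)).toReal
        = if d < 2 * r then π / 12 * (16 * r ^ 3 - 12 * d * r ^ 2 + d ^ 3) else 0 := by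
      intro r hr
      rw [ball_inter_vol x y r hxy hr, ENNReal.toReal_ofReal]
      split
      · rename_i h
        nlinarith [pi_pos, sq_nonneg (2 * r - d), mul_nonneg (sq_nonneg (2 * r - d))
          (by linarith : (0:ℝ) ≤ 4 * r + d)]
      · exact le_refl 0
    have hcong : ∫ r in Set.Ioi (0 : ℝ),
          (r ^ 5)⁻¹ * (volume (Metric.ball x r ∩ Metric.ball y r)).toReal
        = ∫ r in Set.Ioi (0 : ℝ), Set.indicator (Set.Ioi (d / 2)) F r := by
      apply MeasureTheory.setIntegral_congr_fun measurableSet_Ioi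
      intro r hr
      have hr' : 0 < r := hr
      dsimp only
      rw [hvol r hr']
      by_cases h : d / 2 < r
      · rw [Set.indicator_of_mem (Set.mem_Ioi.mpr h), if_pos (by linarith), hFdef]
      · rw [Set.indicator_of_notMem (by simpa using h), if_neg (by push_neg at h ⊢; linarith),
          mul_zero]
    have hIoi : Set.Ioi (0 : ℝ) ∩ Set.Ioi (d / 2) = Set.Ioi (d / 2) := by
      rw [Set.Ioi_inter_Ioi, max_eq_right (by linarith : (0:ℝ) ≤ d / 2)]
    -- FTC on (d/2, ∞)
    set G : ℝ → ℝ := fun r => π / 12 *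
      ((-16) * r⁻¹ + (6 * d) * (r ^ 2)⁻¹ - (d ^ 3 / 4) * (r ^ 4)⁻¹) with hGdef
    have hderiv : ∀ r ∈ Set.Ici (d / 2), HasDerivAt G (F r) r := by
      intro r hr
      have hrpos : 0 < r := lt_of_lt_of_le (by linarith) hr
      have hne : r ≠ 0 := ne_of_gt hrpos
      have h1 := hasDerivAt_inv hne
      have h2 := (hasDerivAt_pow 2 r).inv (pow_ne_zero 2 hne)
      have h4 := (hasDerivAt_pow 4 r).inv (pow_ne_zero 4 hne)
      have H := (((h1.const_mul (-16 : ℝ)).add (h2.const_mul (6 * d))).sub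
        (h4.const_mul (d ^ 3 / 4))).const_mul (π / 12)
      convert H using 1
      · rfl
      · rfl
      · rfl
      rw [hFdef]
      field_simp
      ring
    have htend : Filter.Tendsto G Filter.atTop (nhds 0) := by
      have ht1 : Filter.Tendsto (fun r : ℝ => r⁻¹) Filter.atTop (nhds 0) :=
        tendsto_inv_atTop_zero
      have ht2 : Filter.Tendsto (fun r : ℝ => (r ^ 2)⁻¹) Filter.atTop (nhds 0) :=
        tendsto_inv_atTop_zero.comp (Filter.tendsto_pow_atTop (by norm_num))
      have ht4 : Filter.Tendsto (fun r : ℝ => (r ^ 4)⁻¹) Filter.atTop (nhds 0) :=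
        tendsto_inv_atTop_zero.comp (Filter.tendsto_pow_atTop (by norm_num))
      have H := (((ht1.const_mul (-16 : ℝ)).add (ht2.const_mul (6 * d))).sub
        (ht4.const_mul (d ^ 3 / 4))).const_mul (π / 12)
      have h0 : π / 12 * ((-16 : ℝ) * 0 + (6 * d) * 0 - (d ^ 3 / 4) * 0) = 0 := by ring
      rw [hGdef, ← h0]
      exact H
    have hcont : ContinuousWithinAt G (Set.Ici (d / 2)) (d / 2) :=
      (hderiv (d / 2) Set.self_mem_Ici).continuousAt.continuousWithinAt
    have hderiv' : ∀ r ∈ Set.Ioi (d / 2), HasDerivAt G (F r) r :=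
      fun r hr => hderiv r (Set.mem_Ici.mpr (le_of_lt hr))
    have hnn : ∀ r ∈ Set.Ioi (d / 2), 0 ≤ F r := by
      intro r hr
      have hrpos : 0 < r := lt_trans (by linarith) hr
      have h : 0 ≤ 16 * r ^ 3 - 12 * d * r ^ 2 + d ^ 3 := by
        nlinarith [mul_nonneg (sq_nonneg (2 * r - d)) (by linarith : (0:ℝ) ≤ 4 * r + d)]
      rw [hFdef]
      have := pi_pos
      positivity
    have hint : IntegrableOn F (Set.Ioi (d / 2)) volume :=
      integrableOn_Ioi_deriv_of_nonneg hcont hderiv' hnn htend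
    have hI : ∫ r in Set.Ioi (d / 2), F r = 0 - G (d / 2) :=
      MeasureTheory.integral_Ioi_of_hasDerivAt_of_tendsto hcont hderiv' hint htend
    have hGval : G (d / 2) = -(π / d) := by
      rw [hGdef]
      field_simp
      ring
    rw [hcong, MeasureTheory.setIntegral_indicator measurableSet_Ioi, hIoi, hI, hGval]
    field_simp
    ring
  · intro r
    have hmeas : MeasurableSet (Metric.ball x r ∩ Metric.ball y r) :=
      measurableSet_ball.inter measurableSet_ball
    have hind : ∀ z : E3,
        Set.indicator (Metric.ball x r) (fun _ => (1 : ℝ)) z *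
          Set.indicator (Metric.ball y r) (fun _ => (1 : ℝ)) z
        = Set.indicator (Metric.ball x r ∩ Metric.ball y r) (1 : E3 → ℝ) z := by
      intro z
      by_cases h1 : z ∈ Metric.ball x r <;> by_cases h2 : z ∈ Metric.ball y r <;>
        simp [h1, h2, Set.indicator_apply]
    simp_rw [hind]
    exact (MeasureTheory.integral_indicator_one hmeas).symm
end
end
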